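/- The canonical homogeneous norm ‖·‖_d is continuous on ℝⁿ and is continuous at the origin; moreover ‖x‖_d = 0 if and only if x = 0, and ‖x‖_d = 1 if and only if ‖x‖ = 1. -/

import Mathlib

open Matrix NormedSpace

noncomputable def dil {n : ℕ} (G : Matrix (Fin n) (Fin n) ℝ) (s : ℝ) :
    Matrix (Fin n) (Fin n) ℝ :=
  NormedSpace.exp (s • G)

noncomputable def wnorm {n : ℕ} (P : Matrix (Fin n) (Fin n) ℝ) (x : Fin n → ℝ) : ℝ :=
  Real.sqrt (x ⬝ᵥ P.mulVec x)

/-!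
Along every orbit `s ↦ d(s) x` with `x ≠ 0`, the quadratic form `xᵀ P x` has derivative
`(d(s) x)ᵀ (P G + Gᵀ P) (d(s) x) > 0`, so `r ↦ ‖d(-ln r) x‖` is strictly decreasing on `(0, ∞)`.
Hence `‖x‖_d < r ↔ ‖d(-ln r) x‖ < 1` and `r < ‖x‖_d ↔ 1 < ‖d(-ln r) x‖` for `r > 0`: the
preimages of open half-lines under `‖·‖_d` are open, because `‖d(-ln r) x‖` is continuous in `x`.
Taking `r = 1`, where `d(0) = 1`, gives `‖x‖_d = 1 ↔ ‖x‖ = 1`.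
-/

open Set

structure IsLevelCrossing {X : Type*} [Zero X] (F : X → ℝ → ℝ) (f : X → ℝ) : Prop where
  map_zero : f 0 = 0
  pos : ∀ x ≠ 0, 0 < f x
  apply_eq_one : ∀ x ≠ 0, F x (f x) = 1
  strictAntiOn : ∀ x ≠ 0, StrictAntiOn (F x) (Ioi 0)
  apply_zero_lt_one : ∀ r, F 0 r < 1

namespace IsLevelCrossing

variable {X : Type*} [Zero X] {F : X → ℝ → ℝ} {f : X → ℝ}

theorem nonneg (h : IsLevelCrossing F f) (x : X) : 0 ≤ f x := by
  by_cases hx : x = 0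
  · rw [hx, h.map_zero]
  · exact (h.pos x hx).le

theorem eq_zero_iff (h : IsLevelCrossing F f) (x : X) : f x = 0 ↔ x = 0 := by
  refine ⟨fun hfx => ?_, fun hx => hx ▸ h.map_zero⟩
  by_contra hx
  exact (h.pos x hx).ne' hfx

theorem apply_lt_iff (h : IsLevelCrossing F f) {x : X} {r : ℝ} (hr : 0 < r) :
    f x < r ↔ F x r < 1 := by
  by_cases hx : x = 0
  · simp [hx, h.map_zero, hr, h.apply_zero_lt_one]
  · rw [← h.apply_eq_one x hx]
    exact ((h.strictAntiOn x hx).lt_iff_gt hr (h.pos x hx)).symm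

theorem lt_apply_iff (h : IsLevelCrossing F f) {x : X} {r : ℝ} (hr : 0 < r) :
    r < f x ↔ 1 < F x r := by
  by_cases hx : x = 0
  · rw [hx, h.map_zero]
    exact iff_of_false hr.not_gt (h.apply_zero_lt_one r).not_gt
  · rw [← h.apply_eq_one x hx]
    exact ((h.strictAntiOn x hx).lt_iff_gt (h.pos x hx) hr).symm

theorem apply_eq_iff (h : IsLevelCrossing F f) {x : X} {r : ℝ} (hr : 0 < r) :
    f x = r ↔ F x r = 1 := by
  by_cases hx : x = 0
  · simp [hx, h.map_zero, hr.ne, (h.apply_zero_lt_one r).ne]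
  · rw [← h.apply_eq_one x hx]
    exact eq_comm.trans ((h.strictAntiOn x hx).injOn.eq_iff hr (h.pos x hx)).symm

theorem continuous [TopologicalSpace X] [T1Space X] (h : IsLevelCrossing F f)
    (hF : ∀ r, Continuous (F · r)) : Continuous f := by
  rw [OrderTopology.topology_eq_generate_intervals (α := ℝ), continuous_generateFrom_iff]
  rintro s ⟨r, rfl | rfl⟩
  · rcases lt_trichotomy r 0 with hr | rfl | hr
    · have : f ⁻¹' Ioi r = univ := eq_univ_of_forall fun x => hr.trans_le (h.nonneg x)
      simp [this]
    · have : f ⁻¹' Ioi 0 = {x | x ≠ 0} :=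
        ext fun x => (h.nonneg x).lt_iff_ne'.trans (not_congr (h.eq_zero_iff x))
      exact this ▸ isOpen_ne
    · have : f ⁻¹' Ioi r = {x | 1 < F x r} := ext fun x => h.lt_apply_iff hr
      exact this ▸ isOpen_lt continuous_const (hF r)
  · by_cases hr : 0 < r
    · have : f ⁻¹' Iio r = {x | F x r < 1} := ext fun x => h.apply_lt_iff hr
      exact this ▸ isOpen_lt (hF r) continuous_const
    · have : f ⁻¹' Iio r = ∅ :=
        eq_empty_of_forall_notMem fun x hx => hr ((h.nonneg x).trans_lt hx)
      simp [this]

end IsLevelCrossing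

theorem HasDerivAt.dotProduct {ι : Type*} [Fintype ι] {u v : ℝ → ι → ℝ} {u' v' : ι → ℝ}
    {s : ℝ} (hu : HasDerivAt u u' s) (hv : HasDerivAt v v' s) :
    HasDerivAt (fun t => u t ⬝ᵥ v t) (u' ⬝ᵥ v s + u s ⬝ᵥ v') s := by
  rw [hasDerivAt_pi] at hu hv
  have h := HasDerivAt.fun_sum (u := Finset.univ) fun i _ => (hu i).fun_mul (hv i)
  rw [Finset.sum_add_distrib] at h
  exact h

theorem HasDerivAt.matrix_mulVec {m ι : Type*} [Fintype m] [Fintype ι] (A : Matrix m ι ℝ)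
    {v : ℝ → ι → ℝ} {v' : ι → ℝ} {s : ℝ} (hv : HasDerivAt v v' s) :
    HasDerivAt (fun t => A *ᵥ v t) (A *ᵥ v') s :=
  (LinearMap.toContinuousLinearMap (Matrix.mulVecLin A)).hasFDerivAt.comp_hasDerivAt s hv

section Dilation

variable {n : ℕ}

theorem dil_zero (G : Matrix (Fin n) (Fin n) ℝ) : dil G 0 = 1 := by
  simp [dil]

theorem dil_neg_mul_dil (G : Matrix (Fin n) (Fin n) ℝ) (s : ℝ) : dil G (-s) * dil G s = 1 := by
  rw [dil, dil, neg_smul, ← Matrix.exp_add_of_commute _ _ (Commute.refl (s • G)).neg_left]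
  simp

theorem dil_mulVec_ne_zero (G : Matrix (Fin n) (Fin n) ℝ) (s : ℝ) {x : Fin n → ℝ}
    (hx : x ≠ 0) : dil G s *ᵥ x ≠ 0 := by
  intro h
  apply hx
  rw [← one_mulVec x, ← dil_neg_mul_dil G s, ← mulVec_mulVec, h, mulVec_zero]

theorem hasDerivAt_dil_mulVec (G : Matrix (Fin n) (Fin n) ℝ) (x : Fin n → ℝ) (s : ℝ) :
    HasDerivAt (fun t => dil G t *ᵥ x) (G *ᵥ (dil G s *ᵥ x)) s := by
  -- `exp` does not depend on the norm, so any normed-algebra structure on matrices will do.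
  let : NormedRing (Matrix (Fin n) (Fin n) ℝ) := Matrix.linftyOpNormedRing
  let : NormedAlgebra ℝ (Matrix (Fin n) (Fin n) ℝ) := Matrix.linftyOpNormedAlgebra
  let applyTo : Matrix (Fin n) (Fin n) ℝ →L[ℝ] Fin n → ℝ :=
    LinearMap.toContinuousLinearMap
      { toFun := fun A => A *ᵥ x, map_add' := (add_mulVec · · x), map_smul' := (smul_mulVec · · x) }
  rw [mulVec_mulVec]
  exact applyTo.hasFDerivAt.comp_hasDerivAt s (hasDerivAt_exp_smul_const' G s)

theorem hasDerivAt_dotProduct_mulVec_dil (P G : Matrix (Fin n) (Fin n) ℝ) (x : Fin n → ℝ) (s : ℝ) :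
    HasDerivAt (fun t => (dil G t *ᵥ x) ⬝ᵥ P *ᵥ (dil G t *ᵥ x))
      ((dil G s *ᵥ x) ⬝ᵥ (P * G + Gᵀ * P) *ᵥ (dil G s *ᵥ x)) s := by
  have hv := hasDerivAt_dil_mulVec G x s
  convert hv.dotProduct (hv.matrix_mulVec P) using 1
  rw [add_mulVec, dotProduct_add, add_comm, ← mulVec_mulVec, ← mulVec_mulVec, dotProduct_mulVec,
    ← mulVec_transpose, transpose_transpose, dotProduct_comm]

theorem strictMono_wnorm_dil_mulVec {P G : Matrix (Fin n) (Fin n) ℝ} (hP : P.PosDef)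
    (hmon : (P * G + Gᵀ * P).PosDef) {x : Fin n → ℝ} (hx : x ≠ 0) :
    StrictMono fun s => wnorm P (dil G s *ᵥ x) := by
  have hq : StrictMono fun s => (dil G s *ᵥ x) ⬝ᵥ P *ᵥ (dil G s *ᵥ x) :=
    strictMono_of_hasDerivAt_pos (hasDerivAt_dotProduct_mulVec_dil P G x) fun s => by
      simpa only [star_trivial] using hmon.dotProduct_mulVec_pos (dil_mulVec_ne_zero G s hx)
  have hq_nonneg (s : ℝ) : 0 ≤ (dil G s *ᵥ x) ⬝ᵥ P *ᵥ (dil G s *ᵥ x) := by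
    simpa only [star_trivial] using hP.posSemidef.dotProduct_mulVec_nonneg _
  exact fun a b hab => Real.sqrt_lt_sqrt (hq_nonneg a) (hq hab)

theorem wnorm_zero (P : Matrix (Fin n) (Fin n) ℝ) : wnorm P 0 = 0 := by
  simp [wnorm]

theorem continuous_wnorm_mulVec (P A : Matrix (Fin n) (Fin n) ℝ) :
    Continuous fun x => wnorm P (A *ᵥ x) := by
  have hA : Continuous fun x : Fin n → ℝ => A *ᵥ x := continuous_const.matrix_mulVec continuous_id
  exact (hA.dotProduct (continuous_const.matrix_mulVec hA)).sqrt

end Dilation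

/-- the canonical homogeneous norm is continuous on `ℝⁿ` (in particular at the
origin); moreover `‖x‖_d = 0 ↔ x = 0` and `‖x‖_d = 1 ↔ ‖x‖ = 1`. -/
theorem stmt7 {n : ℕ} (P G : Matrix (Fin n) (Fin n) ℝ) (hP : P.PosDef)
    (hmon : (P * G + Gᵀ * P).PosDef)
    (hnd : (Fin n → ℝ) → ℝ) (hnd0 : hnd 0 = 0)
    (hndpos : ∀ x : Fin n → ℝ, x ≠ 0 → 0 < hnd x)
    (hnddef : ∀ x : Fin n → ℝ, x ≠ 0 → wnorm P (dil G (-(Real.log (hnd x))) *ᵥ x) = 1) :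
    Continuous hnd ∧ ContinuousAt hnd 0 ∧
    (∀ x : Fin n → ℝ, hnd x = 0 ↔ x = 0) ∧
    (∀ x : Fin n → ℝ, hnd x = 1 ↔ wnorm P x = 1) := by
  have hcross : IsLevelCrossing (fun x r => wnorm P (dil G (-Real.log r) *ᵥ x)) hnd :=
    { map_zero := hnd0
      pos := hndpos
      apply_eq_one := hnddef
      strictAntiOn := fun x hx =>
        (strictMono_wnorm_dil_mulVec hP hmon hx).comp_strictAntiOn Real.strictMonoOn_log.neg
      apply_zero_lt_one := fun r => by simp [wnorm_zero] }
  have hcont := hcross.continuous fun r => continuous_wnorm_mulVec P _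
  refine ⟨hcont, hcont.continuousAt, hcross.eq_zero_iff, fun x => ?_⟩
  simpa [dil_zero] using hcross.apply_eq_iff (x := x) one_pos
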